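/- Let P ∈ ℂ[X] be a polynomial of degree at most N−1. Then Y_1^∘(P(z_1)) = x_{12}∘x_{13}∘⋯∘x_{1N}(P(z_1)) is a polynomial in z_1,…,z_N, and its evaluation at (z_1,…,z_N) = (ω, ω², …, ω^N) equals v^{N−1} · P(t^{−1}·ω). -/

import Mathlib

/-!
At a point with `z_1 = ζ` and `z_j = w`, the value of `x_{1j} f` involves only `f` at that point
and at the point with `z_1` replaced by `w`. Iterating, the value of
`x_{1 j_1} ∘ ⋯ ∘ x_{1 j_n} (P(z_1))` at `z_1 = ζ`, `z_{j_k} = w_k` is a linear combination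
`chainEval` of `P(ζ), P(w_1), …, P(w_n)`. Writing `S = {ζ, w_1, …, w_n}`, the coefficient of
`P(w)` is `v^{-n} ∏_{u ∈ S ∖ ζ} (t w - u) / ∏_{u ∈ S ∖ w} (w - u)`, which is `v^{-n}` times the
residue at `w` of `∏_{u ∈ S} (t z - u) / ((t z - ζ) ∏_{u ∈ S} (z - u))`.

When `S` is the set of all `N`-th roots of unity, `∏_{u ≠ x} (y - u) = ∑_k y^k x^{N-1-k}` gives
`∏_{u ≠ ζ} (t w - u) = t^{N-1} ∏_{u ≠ w} (ζ / t - u)`. So the combination is `v^{N-1}` times the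
Lagrange interpolation formula for `P(ζ / t)` at the nodes `S`, which is exact because
`deg P < N`. Each `x_{1j}` maps polynomials to polynomials since `z_1 - z_j` divides
`p - s_{1j} p`.
-/

open scoped BigOperators

noncomputable section

namespace Stmt7

open MvPolynomial

/-- The polynomial ring `ℂ[z₀, z₁, z₂, …]`; only the variables `z_1, …, z_N` are used. -/
abbrev R : Type := MvPolynomial ℕ ℂ

/-- The field `K` of rational functions in the variables. -/
abbrev K : Type := FractionRing R

/-- The variable `z_i` as an element of `K`. -/
def Z (i : ℕ) : K := algebraMap R K (X i)

/-- A complex constant as an element of `K`. -/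
def cc (c : ℂ) : K := algebraMap R K (C c)

/-- Lift an injective ring endomorphism of `R` to `K`. -/
def liftRingHom (f : R →+* R) (hf : Function.Injective f) : K →+* K :=
  IsFractionRing.lift (g := (algebraMap R K).comp f)
    (by
      rw [RingHom.coe_comp]
      exact (IsFractionRing.injective R K).comp hf)

/-- The automorphism `s_{ij}` of `K` interchanging `z_i` and `z_j` (and fixing the other
variables). -/
def swapK (i j : ℕ) : K →+* K :=
  liftRingHom (rename (Equiv.swap i j)).toRingHom
    (rename_injective _ (Equiv.swap i j).injective)

/-- The algebra endomorphism of `R` with `z_i ↦ c·z_i`, fixing the other variables. -/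
def scaleHom (c : ℂ) (i : ℕ) : R →ₐ[ℂ] R :=
  aeval fun k => if k = i then C c * X k else X k

lemma scaleHom_comp (c : ℂ) (hc : c ≠ 0) (i : ℕ) :
    (scaleHom c⁻¹ i).comp (scaleHom c i) = AlgHom.id ℂ R := by
  apply algHom_ext
  intro k
  by_cases h : k = i
  · subst h
    simp only [scaleHom, AlgHom.coe_comp, Function.comp_apply, aeval_X, if_pos, map_mul,
      aeval_C, AlgHom.coe_id, id_eq, algebraMap_eq]
    rw [← mul_assoc, ← C_mul, mul_inv_cancel₀ hc, C_1, one_mul]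
  · simp [scaleHom, h]

lemma scaleHom_injective (c : ℂ) (hc : c ≠ 0) (i : ℕ) :
    Function.Injective (scaleHom c i) := by
  intro p p' hpp'
  have h1 := DFunLike.congr_fun (scaleHom_comp c hc i) p
  have h2 := DFunLike.congr_fun (scaleHom_comp c hc i) p'
  simp only [AlgHom.coe_comp, Function.comp_apply, AlgHom.coe_id, id_eq] at h1 h2
  rw [← h1, ← h2, hpp']

/-- The automorphism `ĉ_i : z_i ↦ c·z_i` of `K` (defined as the identity when `c = 0`). -/
def scaleK (c : ℂ) (i : ℕ) : K →+* K :=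
  if hc : c = 0 then RingHom.id K
  else liftRingHom (scaleHom c i).toRingHom (scaleHom_injective c hc i)

/-- `a_{ij} = v⁻¹·(t·z_i − z_j)/(z_i − z_j)` where `t = v²`. -/
def aa (v : ℂ) (i j : ℕ) : K := cc v⁻¹ * (cc (v ^ 2) * Z i - Z j) / (Z i - Z j)

/-- `b_{ij} = −v⁻¹·(t − 1)·z_j/(z_i − z_j)` where `t = v²`. -/
def bb (v : ℂ) (i j : ℕ) : K := -(cc v⁻¹ * (cc (v ^ 2) - 1) * Z j) / (Z i - Z j)

/-- The operator `x_{ij}` (for `i < j`: `a_{ij} + b_{ij}·s_{ij}`; for `i > j`: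
`a_{ij} − b_{ji}·s_{ij}`). -/
def xop (v : ℂ) (i j : ℕ) : K → K := fun p =>
  if i < j then aa v i j * p + bb v i j * swapK i j p
  else aa v i j * p - bb v j i * swapK i j p

/-- Composition of a list of operators (the head of the list acts last). -/
def compList {α : Type*} (l : List (α → α)) : α → α := l.foldr (· ∘ ·) id

/-- The q-deformed Dunkl–Cherednik operator
`Y_i = x_{i,i+1}∘⋯∘x_{i,N}∘ q̂_i ∘ x_{i,1}∘⋯∘x_{i,i−1}` in the variables `z_1, …, z_N`,
with parameters `v` (so `t = v²`) and `q`. -/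
def Yop (v q : ℂ) (N i : ℕ) : K → K :=
  compList ((List.range' (i + 1) (N - i)).map fun j => xop v i j) ∘
    ⇑(scaleK q i) ∘
      compList ((List.range' 1 (i - 1)).map fun j => xop v i j)

/-- The primitive `N`-th root of unity `ω = exp(2πi/N)`. -/
def omega (N : ℕ) : ℂ := Complex.exp (2 * (Real.pi : ℂ) * Complex.I / (N : ℂ))

end Stmt7

section RootsOfUnity

open Finset Polynomial

variable {F : Type*} [CommRing F] [IsDomain F] {N : ℕ} {ω : F}

lemma List.range'_one_eq_cons {N : ℕ} (hN : 0 < N) :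
    List.range' 1 N = 1 :: List.range' 2 (N - 1) := by
  obtain ⟨n, rfl⟩ := Nat.exists_eq_succ_of_ne_zero hN.ne'
  rfl

lemma IsPrimitiveRoot.nodup_map_pow_range' (hω : IsPrimitiveRoot ω N) :
    ((List.range' 1 N).map (ω ^ ·)).Nodup := by
  rcases N.eq_zero_or_pos with rfl | hN
  · simp
  rw [List.range'_eq_map_range, List.map_map]
  refine List.nodup_range.map_on fun a ha b hb hab =>
    hω.injOn_pow_mul (hω.ne_zero hN.ne') (by simpa using ha) (by simpa using hb) ?_
  simpa [pow_succ, add_comm] using hab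

lemma IsPrimitiveRoot.toFinset_map_pow_range' [DecidableEq F] (hω : IsPrimitiveRoot ω N)
    (hN : 0 < N) :
    ((List.range' 2 (N - 1)).map (ω ^ ·)).toFinset = (nthRootsFinset N (1 : F)).erase ω := by
  have hnodup := hω.nodup_map_pow_range'
  have hall : ((List.range' 1 N).map (ω ^ ·)).toFinset = nthRootsFinset N (1 : F) := by
    refine eq_of_subset_of_card_le (fun x hx => ?_) ?_
    · simp only [List.mem_toFinset, List.mem_map] at hx
      obtain ⟨k, -, rfl⟩ := hx
      rw [Polynomial.mem_nthRootsFinset hN, ← pow_mul, mul_comm, pow_mul, hω.pow_eq_one, one_pow]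
    · rw [hω.card_nthRootsFinset, List.toFinset_card_of_nodup hnodup, List.length_map,
        List.length_range']
  rw [List.range'_one_eq_cons hN, List.map_cons, List.nodup_cons] at hnodup
  rw [← hall, List.range'_one_eq_cons hN, List.map_cons, List.toFinset_cons, pow_one,
    erase_insert]
  simpa using hnodup.1

lemma IsPrimitiveRoot.prod_erase_nthRootsFinset_sub [DecidableEq F] (hω : IsPrimitiveRoot ω N)
    (hN : 0 < N) {x : F} (hx : x ^ N = 1) (y : F) :
    ∏ u ∈ (nthRootsFinset N (1 : F)).erase x, (y - u)
      = ∑ k ∈ range N, y ^ k * x ^ (N - 1 - k) := by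
  have hprod : (∏ u ∈ (nthRootsFinset N (1 : F)).erase x, (X - C u)) * (X - C x)
      = (∑ k ∈ range N, X ^ k * C x ^ (N - 1 - k)) * (X - C x) := by
    rw [prod_erase_mul _ _ ((Polynomial.mem_nthRootsFinset hN 1).2 hx),
      ← X_pow_sub_one_eq_prod hN hω, geom_sum₂_mul, ← C_pow, hx, C_1]
  simpa [eval_prod, eval_finsetSum] using
    congrArg (eval y) (mul_right_cancel₀ (X_sub_C_ne_zero x) hprod)

end RootsOfUnity

namespace MvPolynomial

variable {σ R : Type*}

lemma X_sub_X_dvd_sub_rename_swap [CommRing R] [DecidableEq σ] (i j : σ)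
    (p : MvPolynomial σ R) :
    X i - X j ∣ p - rename (Equiv.swap i j) p := by
  induction p using MvPolynomial.induction_on with
  | C a => simp
  | add p q hp hq => simpa only [map_add, add_sub_add_comm] using dvd_add hp hq
  | mul_X p k hp =>
    have hk : (X i - X j : MvPolynomial σ R) ∣ X k - X (Equiv.swap i j k) := by
      by_cases hki : k = i
      · simp [hki]
      by_cases hkj : k = j
      · simpa [hkj] using dvd_sub_comm.1 (dvd_refl (X i - X j : MvPolynomial σ R))
      · simp [Equiv.swap_apply_of_ne_of_ne hki hkj]
    have hsplit : p * X k - rename (Equiv.swap i j) (p * X k)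
        = (p - rename (Equiv.swap i j) p) * X k
          + rename (Equiv.swap i j) p * (X k - X (Equiv.swap i j k)) := by
      rw [map_mul, rename_X]; ring
    rw [hsplit]
    exact dvd_add (dvd_mul_of_dvd_left hp _) (dvd_mul_of_dvd_right hk _)

lemma eval_aeval_X [CommSemiring R] (e : σ → R) (i : σ) (P : Polynomial R) :
    eval e (Polynomial.aeval (X i : MvPolynomial σ R) P) = P.eval (e i) := by
  have h := Polynomial.aeval_algHom_apply (aeval e) (X i : MvPolynomial σ R) P
  rw [aeval_X, Polynomial.coe_aeval_eq_eval] at h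
  exact h.symm

end MvPolynomial

namespace Stmt7

open Finset

section ScalarChain

open Polynomial

variable {F : Type*} [Field F]

def aCoeff (v x y : F) : F := v⁻¹ * (v ^ 2 * x - y) / (x - y)

def bCoeff (v x y : F) : F := -(v⁻¹ * (v ^ 2 - 1) * y) / (x - y)

lemma bCoeff_mul_aCoeff {v x y w : F} (hxy : x ≠ y) (hxw : x ≠ w) (hyw : y ≠ w) :
    bCoeff v x y * aCoeff v y w = aCoeff v x w * bCoeff v x y + bCoeff v x w * bCoeff v w y := by
  have h1 : x - y ≠ 0 := sub_ne_zero.2 hxy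
  have h2 : x - w ≠ 0 := sub_ne_zero.2 hxw
  have h3 : y - w ≠ 0 := sub_ne_zero.2 hyw
  have h4 : w - y ≠ 0 := sub_ne_zero.2 hyw.symm
  unfold aCoeff bCoeff
  field_simp
  ring

lemma prod_aCoeff (v x : F) (s : Finset F) :
    ∏ u ∈ s, aCoeff v x u
      = v⁻¹ ^ #s * (∏ u ∈ s, (v ^ 2 * x - u)) / ∏ u ∈ s, (x - u) := by
  simp only [aCoeff, prod_div_distrib, prod_mul_distrib, prod_const]

variable [DecidableEq F]

/-- The value of `x_{1 j_1} ∘ ⋯ ∘ x_{1 j_n} (P(z_1))` at `z_1 = ζ`, `z_{j_k} = w_k`,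
where `W = {w_1, …, w_n}`. -/
def chainEval (v : F) (P : F[X]) (ζ : F) (W : Finset F) : F :=
  (∏ w ∈ W, aCoeff v ζ w) * P.eval ζ
    + ∑ w ∈ W, bCoeff v ζ w * (∏ u ∈ W.erase w, aCoeff v w u) * P.eval w

lemma chainEval_empty (v : F) (P : F[X]) (ζ : F) : chainEval v P ζ ∅ = P.eval ζ := by
  simp [chainEval]

lemma chainEval_insert (v : F) (P : F[X]) {ζ w : F} {W : Finset F} (hζw : ζ ≠ w)
    (hζ : ζ ∉ W) (hw : w ∉ W) :
    chainEval v P ζ (insert w W)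
      = aCoeff v ζ w * chainEval v P ζ W + bCoeff v ζ w * chainEval v P w W := by
  have hcross : ∀ u ∈ W, bCoeff v ζ u * (∏ u' ∈ (insert w W).erase u, aCoeff v u u')
      = (aCoeff v ζ w * bCoeff v ζ u + bCoeff v ζ w * bCoeff v w u)
          * ∏ u' ∈ W.erase u, aCoeff v u u' := by
    intro u hu
    have hwu : w ≠ u := (ne_of_mem_of_not_mem hu hw).symm
    rw [erase_insert_of_ne hwu, prod_insert (fun h => hw (mem_of_mem_erase h)), ← mul_assoc,
      bCoeff_mul_aCoeff (ne_of_mem_of_not_mem hu hζ).symm hζw hwu.symm]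
  simp only [chainEval, prod_insert hw, sum_insert hw, erase_insert hw, mul_add, mul_sum]
  rw [sum_congr rfl fun u hu => by rw [hcross u hu]]
  simp only [add_mul, sum_add_distrib, mul_assoc]
  ring

lemma chainEval_eq_sum (v : F) (P : F[X]) {ζ : F} {W : Finset F} (hζ : ζ ∉ W) :
    chainEval v P ζ W = v⁻¹ ^ #W * ∑ w ∈ insert ζ W,
      P.eval w * (∏ u ∈ W, (v ^ 2 * w - u)) / ∏ u ∈ (insert ζ W).erase w, (w - u) := by
  rw [sum_insert hζ, erase_insert hζ, chainEval, prod_aCoeff, mul_add, mul_sum]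
  congr 1
  · ring
  refine sum_congr rfl fun w hw => ?_
  have hζw : ζ ≠ w := (ne_of_mem_of_not_mem hw hζ).symm
  rw [erase_insert_of_ne hζw, prod_insert (fun h => hζ (mem_of_mem_erase h)), prod_aCoeff,
    ← mul_prod_erase W _ hw, ← card_erase_add_one hw]
  have h1 : ∏ u ∈ W.erase w, (w - u) ≠ 0 :=
    prod_ne_zero_iff.2 fun u hu => sub_ne_zero.2 (ne_of_mem_of_not_mem hu (notMem_erase w W)).symm
  have h2 : w - ζ ≠ 0 := sub_ne_zero.2 hζw.symm
  have h3 : ζ - w ≠ 0 := sub_ne_zero.2 hζw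
  unfold bCoeff
  field_simp
  ring

variable {N : ℕ} {ω : F}

lemma prod_erase_nthRootsFinset_swap (hω : IsPrimitiveRoot ω N) (hN : 0 < N) {v x ζ : F}
    (hv : v ≠ 0) (hx : x ^ N = 1) (hζ : ζ ^ N = 1) :
    v⁻¹ ^ (N - 1) * ∏ u ∈ (nthRootsFinset N (1 : F)).erase ζ, (v ^ 2 * x - u)
      = v ^ (N - 1) * ∏ u ∈ (nthRootsFinset N (1 : F)).erase x, ((v ^ 2)⁻¹ * ζ - u) := by
  rw [hω.prod_erase_nthRootsFinset_sub hN hζ, hω.prod_erase_nthRootsFinset_sub hN hx, mul_sum,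
    mul_sum, ← sum_range_reflect]
  refine sum_congr rfl fun k hk => ?_
  obtain ⟨m, hm⟩ : ∃ m, N - 1 = m + k := ⟨N - 1 - k, by have := mem_range.1 hk; omega⟩
  rw [show N - 1 - (N - 1 - k) = k by omega, show N - 1 - k = m by omega, hm]
  have hpow : v⁻¹ ^ (m + k) * (v ^ 2) ^ m = v ^ (m + k) * ((v ^ 2)⁻¹) ^ k := by
    simp only [inv_pow, pow_add, ← pow_mul]
    field_simp
    ring
  linear_combination x ^ m * ζ ^ k * hpow

lemma chainEval_nthRootsFinset_erase (hω : IsPrimitiveRoot ω N) (hN : 0 < N) {v ζ : F}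
    (hv : v ≠ 0) (hζ : ζ ^ N = 1) {P : F[X]} (hP : P.natDegree < N) :
    chainEval v P ζ ((nthRootsFinset N (1 : F)).erase ζ)
      = v ^ (N - 1) * P.eval ((v ^ 2)⁻¹ * ζ) := by
  set μ := nthRootsFinset N (1 : F)
  have hζμ : ζ ∈ μ := (mem_nthRootsFinset hN 1).2 hζ
  have hcard : #μ = N := hω.card_nthRootsFinset
  have hdeg : P.degree < #μ := hcard ▸ degree_le_natDegree.trans_lt (WithBot.coe_lt_coe.2 hP)
  have hlagrange :=
    congrArg (eval ((v ^ 2)⁻¹ * ζ)) (Lagrange.eq_interpolate (Set.injOn_id _) hdeg)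
  simp only [Lagrange.interpolate_apply, Lagrange.basis, Lagrange.basisDivisor, eval_finsetSum,
    eval_mul, eval_C, eval_prod, eval_sub, eval_X, id] at hlagrange
  rw [hlagrange, chainEval_eq_sum v P (notMem_erase ζ μ), insert_erase hζμ,
    card_erase_of_mem hζμ, hcard, mul_sum, mul_sum]
  refine sum_congr rfl fun w hw => ?_
  rw [prod_mul_distrib, prod_inv_distrib]
  linear_combination eval w P / (∏ u ∈ μ.erase w, (w - u))
    * prod_erase_nthRootsFinset_swap hω hN hv ((mem_nthRootsFinset hN 1).1 hw) hζ

end ScalarChain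

open MvPolynomial

lemma swapK_algebraMap (i j : ℕ) (p : R) :
    swapK i j (algebraMap R K p) = algebraMap R K (rename (Equiv.swap i j) p) := by
  rw [swapK, liftRingHom, IsFractionRing.lift_algebraMap]
  rfl

lemma algebraMap_X_sub_X_ne_zero {i j : ℕ} (hij : i ≠ j) : algebraMap R K (X i - X j) ≠ 0 :=
  (map_ne_zero_iff _ (IsFractionRing.injective R K)).2
    (sub_ne_zero.2 fun h => hij (X_injective h))

lemma xop_algebraMap {i j : ℕ} (hij : i < j) (v : ℂ) (p : R) :
    xop v i j (algebraMap R K p) = cc v⁻¹ * algebraMap R K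
        ((C (v ^ 2) * X i - X j) * p - (C (v ^ 2) - 1) * X j * rename (Equiv.swap i j) p)
      / algebraMap R K (X i - X j) := by
  have hsub := algebraMap_X_sub_X_ne_zero hij.ne
  rw [map_sub] at hsub
  rw [xop, if_pos hij, swapK_algebraMap, aa, bb, Z, Z, cc, cc]
  simp only [map_sub, map_mul, map_one]
  field_simp
  ring

lemma exists_xop_algebraMap {i j : ℕ} (hij : i < j) (v : ℂ) (p : R) :
    ∃ q : R, algebraMap R K q = xop v i j (algebraMap R K p) ∧
      ∀ e : ℕ → ℂ, e i ≠ e j → eval e q = aCoeff v (e i) (e j) * eval e p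
        + bCoeff v (e i) (e j) * eval (e ∘ Equiv.swap i j) p := by
  obtain ⟨r, hr⟩ : X i - X j ∣
      (C (v ^ 2) * X i - X j) * p - (C (v ^ 2) - 1) * X j * rename (Equiv.swap i j) p := by
    have hsplit : (C (v ^ 2) * X i - X j) * p - (C (v ^ 2) - 1) * X j * rename (Equiv.swap i j) p
        = (X i - X j) * (C (v ^ 2) * p)
          + (C (v ^ 2) - 1) * X j * (p - rename (Equiv.swap i j) p) := by
      ring
    rw [hsplit]
    exact dvd_add (dvd_mul_right _ _) (dvd_mul_of_dvd_right (X_sub_X_dvd_sub_rename_swap i j p) _)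
  refine ⟨C v⁻¹ * r, ?_, fun e he => ?_⟩
  · rw [xop_algebraMap hij, hr, map_mul _ (X i - X j), mul_div_assoc,
      mul_div_cancel_left₀ _ (algebraMap_X_sub_X_ne_zero hij.ne), map_mul]
    rfl
  · have heval := congrArg (eval e) hr
    simp only [map_sub, map_mul, eval_C, eval_X, map_one, eval_rename] at heval
    have hevalr : eval e r = ((v ^ 2 * e i - e j) * eval e p
        - (v ^ 2 - 1) * e j * eval (e ∘ Equiv.swap i j) p) / (e i - e j) := by
      rw [heval, mul_div_cancel_left₀ _ (sub_ne_zero.2 he)]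
    rw [map_mul, eval_C, hevalr, aCoeff, bCoeff]
    ring

lemma exists_compList_xop (v : ℂ) (P : Polynomial ℂ) (i : ℕ) (js : List ℕ)
    (hjs : ∀ j ∈ js, i < j) :
    ∃ Q : R, algebraMap R K Q
        = compList (js.map fun j => xop v i j) (algebraMap R K (Polynomial.aeval (X i : R) P)) ∧
      ∀ e : ℕ → ℂ, ((i :: js).map e).Nodup →
        eval e Q = chainEval v P (e i) (js.map e).toFinset := by
  induction js with
  | nil => exact ⟨_, rfl, fun e _ => by simp [eval_aeval_X, chainEval_empty]⟩
  | cons j js ih =>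
    obtain ⟨Q, hQ, hQe⟩ := ih fun k hk => hjs k (List.mem_cons_of_mem j hk)
    obtain ⟨Q', hQ', hQ'e⟩ := exists_xop_algebraMap (hjs j List.mem_cons_self) v Q
    refine ⟨Q', hQ'.trans (congrArg (xop v i j) hQ), fun e he => ?_⟩
    simp only [List.map_cons, List.nodup_cons, List.mem_cons, List.mem_map, not_or, not_exists,
      not_and] at he
    obtain ⟨⟨hij, hi⟩, hj, hjs'⟩ := he
    have hnodup : ∀ x, (∀ k ∈ js, ¬e k = x) → (x :: js.map e).Nodup := fun x hx =>
      List.nodup_cons.2 ⟨by simpa using hx, hjs'⟩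
    have hswap : js.map (e ∘ Equiv.swap i j) = js.map e :=
      List.map_congr_left fun k hk => congrArg e (Equiv.swap_apply_of_ne_of_ne
        (hjs k (List.mem_cons_of_mem j hk)).ne' fun hkj => hj k hk (congrArg e hkj))
    have hswap_i : (e ∘ Equiv.swap i j) i = e j := congrArg e (Equiv.swap_apply_left i j)
    rw [hQ'e e hij, hQe e (hnodup _ hi),
      hQe _ (by rw [List.map_cons, hswap, hswap_i]; exact hnodup _ hj), hswap, hswap_i,
      List.map_cons, List.toFinset_cons,
      chainEval_insert v P hij (by simpa using hi) (by simpa using hj)]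

/-- For a one-variable polynomial `P` of degree at most `N − 1`, the element
`Y_1^∘(P(z_1)) = x_{12}∘⋯∘x_{1N}(P(z_1))` is a polynomial in `z_1, …, z_N`, and its evaluation
at `(ω, ω², …, ω^N)` equals `v^{N−1}·P(t⁻¹·ω)`. -/
theorem Y1_classical_eval (N : ℕ) (hN : 0 < N) (v : ℂ) (hv : v ≠ 0)
    (P : Polynomial ℂ) (hdeg : P.natDegree ≤ N - 1) :
    ∃ Q : R,
      algebraMap R K Q
          = compList ((List.range' 2 (N - 1)).map fun j => xop v 1 j)
              (algebraMap R K (Polynomial.aeval (X 1 : R) P)) ∧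
        eval (fun j => omega N ^ j) Q = v ^ (N - 1) * Polynomial.eval ((v ^ 2)⁻¹ * omega N) P := by
  have hω : IsPrimitiveRoot (omega N) N := Complex.isPrimitiveRoot_exp N hN.ne'
  obtain ⟨Q, hQ, hQe⟩ := exists_compList_xop v P 1 (List.range' 2 (N - 1))
    fun j hj => by simp only [List.mem_range'_1] at hj; omega
  have hnodup : ((1 :: List.range' 2 (N - 1)).map (omega N ^ ·)).Nodup :=
    List.range'_one_eq_cons hN ▸ hω.nodup_map_pow_range'
  refine ⟨Q, hQ, ?_⟩
  rw [hQe _ hnodup, pow_one, hω.toFinset_map_pow_range' hN,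
    chainEval_nthRootsFinset_erase hω hN hv hω.pow_eq_one (by omega)]

end Stmt7
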